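/- Let N be a positive integer, X ∈ M_N(ℂ), m ≥ 2 a natural number, and a, b, c, d ∈ Fin N. Define G : ℂ × ℂ → ℂ by G(s,t) = Tr((X + s·E(d,a) + t·E(b,c))^m). Then the mixed second partial derivative ∂²G/∂s∂t at (0,0) equals m · Σ_{ℓ=0}^{m−2} (X^ℓ)_{ab} · (X^{m−2−ℓ})_{cd}. Equivalently, the noncommutative Laplacian of Tr(X^m/m) in one Hermitian variable is Σ_{ℓ=0}^{m−2} X^ℓ ⊗ X^{m−2−ℓ}. -/

import Mathlib

/-!
Differentiating in `s` at `0` and using cyclicity of the trace gives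
`m · Tr((X + t E(b,c))^(m-1) E(d,a))`. The derivative of the noncommutative power
`(X + t E(b,c))^(m-1)` at `t = 0` is `Σ_ℓ X^ℓ E(b,c) X^(m-2-ℓ)`, and
`Tr(P E(b,c) Q E(d,a)) = P_ab Q_cd`.
-/

open Matrix

namespace Matrix

lemma trace_mul_single_mul_single {ι R : Type*} [Fintype ι] [DecidableEq ι] [CommSemiring R]
    (P Q : Matrix ι ι R) (a b c d : ι) :
    trace (P * single b c 1 * Q * single d a 1) = P a b * Q c d := by
  rw [trace_mul_cycle, ← mul_assoc, single_mul_mul_single, trace_single_mul, one_mul, mul_one,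
    smul_eq_mul]

attribute [local instance] Matrix.linftyOpNormedRing Matrix.linftyOpNormedAlgebra

variable {𝕜 ι : Type*} [NontriviallyNormedField 𝕜] [Fintype ι] [DecidableEq ι]

lemma hasDerivAt_add_smul_pow (C B : Matrix ι ι 𝕜) (n : ℕ) :
    HasDerivAt (fun s : 𝕜 => (C + s • B) ^ n)
      (∑ l ∈ Finset.range n, C ^ l * B * C ^ (n - 1 - l)) 0 := by
  have h := (((hasDerivAt_id (0 : 𝕜)).smul_const B).const_add C).fun_pow' n
  simp only [id_eq, one_smul, zero_smul, add_zero, Nat.pred_eq_sub_one] at h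
  rw [← Finset.sum_range_reflect]
  refine h.congr_deriv (Finset.sum_congr rfl fun l hl => ?_)
  rw [Nat.sub_sub_self (by have := Finset.mem_range.mp hl; omega)]

lemma _root_.HasDerivAt.matrix_trace {f : 𝕜 → Matrix ι ι 𝕜} {f' : Matrix ι ι 𝕜} {x : 𝕜}
    (h : HasDerivAt f f' x) : HasDerivAt (fun s => trace (f s)) (trace f') x :=
  let traceCLM : Matrix ι ι 𝕜 →L[𝕜] 𝕜 := ⟨traceLinearMap ι 𝕜 𝕜, continuous_id.matrix_trace⟩
  traceCLM.hasFDerivAt.comp_hasDerivAt x h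

lemma hasDerivAt_trace_add_smul_pow (C B : Matrix ι ι 𝕜) (n : ℕ) :
    HasDerivAt (fun s : 𝕜 => trace ((C + s • B) ^ n)) (n * trace (C ^ (n - 1) * B)) 0 := by
  refine (hasDerivAt_add_smul_pow C B n).matrix_trace.congr_deriv ?_
  have cyclic : ∀ l ∈ Finset.range n,
      trace (C ^ l * B * C ^ (n - 1 - l)) = trace (C ^ (n - 1) * B) := fun l hl => by
    rw [trace_mul_comm, ← mul_assoc, ← pow_add,
      Nat.sub_add_cancel (by have := Finset.mem_range.mp hl; omega)]
  rw [trace_sum, Finset.sum_congr rfl cyclic, Finset.sum_const, Finset.card_range, nsmul_eq_mul]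

lemma deriv_deriv_trace_add_smul_add_smul_pow (C A B : Matrix ι ι 𝕜) (n : ℕ) :
    deriv (fun t : 𝕜 => deriv (fun s : 𝕜 => trace ((C + s • A + t • B) ^ n)) 0) 0
      = n * ∑ l ∈ Finset.range (n - 1), trace (C ^ l * B * C ^ (n - 2 - l) * A) := by
  have inner (t : 𝕜) :
      deriv (fun s : 𝕜 => trace ((C + s • A + t • B) ^ n)) 0
        = n * trace ((C + t • B) ^ (n - 1) * A) := by
    simpa only [add_right_comm] using (hasDerivAt_trace_add_smul_pow (C + t • B) A n).deriv
  simp only [inner]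
  rw [(((hasDerivAt_add_smul_pow C B (n - 1)).mul_const A).matrix_trace.const_mul _).deriv,
    Finset.sum_mul, trace_sum, Nat.sub_sub]

end Matrix

theorem stmt9_general (N : ℕ) (X : Matrix (Fin N) (Fin N) ℂ) (m : ℕ)
    (a b c d : Fin N) :
    deriv (fun t : ℂ => deriv (fun s : ℂ =>
        Matrix.trace ((X + s • Matrix.single d a (1 : ℂ)
          + t • Matrix.single b c (1 : ℂ)) ^ m)) 0) 0
      = (m : ℂ) * ∑ l ∈ Finset.range (m - 1), (X ^ l) a b * (X ^ (m - 2 - l)) c d := by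
  simp only [deriv_deriv_trace_add_smul_add_smul_pow, trace_mul_single_mul_single]

/-- The noncommutative Laplacian of `Tr(X^m/m)` in one Hermitian variable:
the mixed second partial derivative at `(0,0)` of
`G(s,t) = Tr((X + s·E(d,a) + t·E(b,c))^m)` equals
`m · Σ_{ℓ=0}^{m−2} (X^ℓ)_{ab}·(X^{m−2−ℓ})_{cd}`. -/
theorem stmt9 (N : ℕ) (hN : 0 < N) (X : Matrix (Fin N) (Fin N) ℂ) (m : ℕ) (hm : 2 ≤ m)
    (a b c d : Fin N) :
    deriv (fun t : ℂ => deriv (fun s : ℂ =>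
        Matrix.trace ((X + s • Matrix.single d a (1 : ℂ)
          + t • Matrix.single b c (1 : ℂ)) ^ m)) 0) 0
      = (m : ℂ) * ∑ l ∈ Finset.range (m - 1), (X ^ l) a b * (X ^ (m - 2 - l)) c d :=
  stmt9_general N X m a b c d
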